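/- If a homogeneous form F of degree d in n variables is an s-fold direct sum, i.e. F = F_1 + ⋯ + F_s with each F_i ∈ S^d V_i nonzero and V = V_1 ⊕ ⋯ ⊕ V_s, then the apolar ideal F^⊥ has at least s − 1 minimal generators of degree d, i.e. dim_ℂ (F^⊥/mF^⊥)_d ≥ s − 1. -/

import Mathlib

/-!
Apolarity setup.  `S = ℂ[x_1,…,x_n]` and its dual ring `T = ℂ[α_1,…,α_n]` are both
realized as `MvPolynomial (Fin n) ℂ`; the apolarity action `Θ ⌟ F` (`contract Θ F`)
lets `α_i` act as the partial differentiation operator `∂/∂x_i`.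
-/

open MvPolynomial

noncomputable section Apolarity

/-- Partial derivatives on `ℂ[x_1,…,x_n]` commute. -/
lemma pderiv_pderiv_comm (n : ℕ) (i j : Fin n) (f : MvPolynomial (Fin n) ℂ) :
    pderiv i (pderiv j f) = pderiv j (pderiv i f) := by
  induction f using MvPolynomial.induction_on with
  | C a => simp
  | add p q hp hq => simp [hp, hq]
  | mul_X p k hp =>
    rcases eq_or_ne i k with rfl | hik
    · rcases eq_or_ne j i with rfl | hjk
      · rfl
      · simp only [pderiv_mul, pderiv_X_self, pderiv_X_of_ne hjk, pderiv_X_of_ne hjk.symm,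
          map_add, map_zero, map_one, Derivation.map_one_eq_zero, mul_one, mul_zero,
          add_zero, zero_add, hp]
    · rcases eq_or_ne j k with rfl | hjk
      · simp only [pderiv_mul, pderiv_X_self, pderiv_X_of_ne hik, pderiv_X_of_ne hik.symm,
          map_add, map_zero, map_one, Derivation.map_one_eq_zero, mul_one, mul_zero,
          add_zero, zero_add, hp]
      · simp only [pderiv_mul, pderiv_X_of_ne hik.symm, pderiv_X_of_ne hjk.symm, map_add,
          map_zero, mul_zero, add_zero, zero_add, hp]

variable (n : ℕ)

/-- The endomorphism `∂/∂x_i` of `S = ℂ[x_1,…,x_n]`. -/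
def derOp (i : Fin n) : Module.End ℂ (MvPolynomial (Fin n) ℂ) :=
  (pderiv i).toLinearMap

lemma derOp_commute (i j : Fin n) : Commute (derOp n i) (derOp n j) :=
  LinearMap.ext fun f => pderiv_pderiv_comm n i j f

/-- The commuting product of the operators `(∂/∂x_i)^(m i)`. -/
def piDiffHom : (Fin n → Multiplicative ℕ) →* Module.End ℂ (MvPolynomial (Fin n) ℂ) :=
  MonoidHom.noncommPiCoprod (fun i : Fin n => powersHom _ (derOp n i))
    (fun i j _ x y => ((derOp_commute n i j).pow_pow x y))

/-- The differential operator `∏ i, (∂/∂x_i)^(m i)` attached to an exponent vector `m`. -/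
def diffMonoidHom : Multiplicative (Fin n →₀ ℕ) →* Module.End ℂ (MvPolynomial (Fin n) ℂ) :=
  (piDiffHom n).comp
    (AddMonoidHom.toMultiplicative
      (Finsupp.coeFnAddHom : (Fin n →₀ ℕ) →+ (Fin n → ℕ)))

/-- The apolarity action of the dual ring `T = ℂ[α_1,…,α_n]` on `S = ℂ[x_1,…,x_n]`, as an
algebra homomorphism to differential operators: `α_i` acts as `∂/∂x_i`. -/
def apolarAlgHom :
    MvPolynomial (Fin n) ℂ →ₐ[ℂ] Module.End ℂ (MvPolynomial (Fin n) ℂ) :=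
  AddMonoidAlgebra.lift ℂ _ (Fin n →₀ ℕ) (diffMonoidHom n)

variable {n}

/-- The apolarity action `Θ ⌟ F`: apply to `F` the differential operator obtained from `Θ`
by substituting `∂/∂x_i` for the `i`-th (dual) variable. -/
def contract (Θ F : MvPolynomial (Fin n) ℂ) : MvPolynomial (Fin n) ℂ :=
  apolarAlgHom n Θ F

lemma apolarAlgHom_X (i : Fin n) : apolarAlgHom n (X i) = derOp n i := by
  classical
  have hX : (X i : MvPolynomial (Fin n) ℂ)
      = AddMonoidAlgebra.single (Finsupp.single i 1) (1 : ℂ) := rfl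
  rw [hX]
  rw [show apolarAlgHom n (AddMonoidAlgebra.single (Finsupp.single i 1) (1:ℂ))
      = (1:ℂ) • diffMonoidHom n (Multiplicative.ofAdd (Finsupp.single i 1)) from
    AddMonoidAlgebra.lift_single _ _ _]
  rw [one_smul]
  change piDiffHom n ((AddMonoidHom.toMultiplicative
        (Finsupp.coeFnAddHom : (Fin n →₀ ℕ) →+ (Fin n → ℕ)))
        (Multiplicative.ofAdd (Finsupp.single i 1))) = derOp n i
  have harg : (AddMonoidHom.toMultiplicative
        (Finsupp.coeFnAddHom : (Fin n →₀ ℕ) →+ (Fin n → ℕ)))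
        (Multiplicative.ofAdd (Finsupp.single i 1))
      = Pi.mulSingle (M := fun _ : Fin n => Multiplicative ℕ) i (Multiplicative.ofAdd 1) := by
    funext j
    rcases eq_or_ne j i with rfl | hj
    · show Multiplicative.ofAdd ((Finsupp.single j 1 : Fin n →₀ ℕ) j)
        = Pi.mulSingle (M := fun _ : Fin n => Multiplicative ℕ) j (Multiplicative.ofAdd 1) j
      rw [Finsupp.single_eq_same, Pi.mulSingle_eq_same]
    · show Multiplicative.ofAdd ((Finsupp.single i 1 : Fin n →₀ ℕ) j)
        = Pi.mulSingle (M := fun _ : Fin n => Multiplicative ℕ) i (Multiplicative.ofAdd 1) j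
      rw [Finsupp.single_eq_of_ne hj, Pi.mulSingle_eq_of_ne hj]
      exact ofAdd_zero
  refine (congrArg (piDiffHom n) harg).trans ?_
  rw [piDiffHom]
  exact (MonoidHom.noncommPiCoprod_mulSingle _ i _).trans rfl

/-- Sanity check: the dual variable `α_i` acts on `F` as `∂F/∂x_i`. -/
@[simp] lemma contract_X (i : Fin n) (F : MvPolynomial (Fin n) ℂ) :
    contract (X i) F = pderiv i F := by
  rw [contract, apolarAlgHom_X]; rfl

/-- The apolar (annihilator) ideal `F^⊥ = {Θ ∈ T : Θ ⌟ F = 0}` of a polynomial `F`. -/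
def apolarIdeal (F : MvPolynomial (Fin n) ℂ) : Ideal (MvPolynomial (Fin n) ℂ) where
  carrier := {Θ | contract Θ F = 0}
  zero_mem' := by simp [contract]
  add_mem' := by
    intro a b ha hb
    simp only [Set.mem_setOf_eq, contract, map_add, LinearMap.add_apply] at *
    rw [ha, hb, add_zero]
  smul_mem' := by
    intro c x hx
    simp only [Set.mem_setOf_eq, smul_eq_mul, contract, map_mul, Module.End.mul_apply] at *
    rw [hx, map_zero]

@[simp] lemma mem_apolarIdeal {Θ F : MvPolynomial (Fin n) ℂ} :
    Θ ∈ apolarIdeal F ↔ contract Θ F = 0 := Iff.rfl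

variable (n)

/-- The irrelevant maximal ideal `m = ⟨α_1,…,α_n⟩` of `T`. -/
def irrIdeal : Ideal (MvPolynomial (Fin n) ℂ) :=
  Ideal.span (Set.range X)

variable {n}

/-- The homogeneous ideal `I` has a minimal generator of degree `k`, i.e. `(I/mI)_k ≠ 0`:
there is a homogeneous element of `I` of degree `k` not belonging to `m * I`. -/
def HasMinGenOfDegree (I : Ideal (MvPolynomial (Fin n) ℂ)) (k : ℕ) : Prop :=
  ∃ Θ, Θ ∈ I ∧ Θ.IsHomogeneous k ∧ Θ ∉ irrIdeal n * I

/-- The homogeneous ideal `I` has at least `r` minimal generators of degree `k`, i.e.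
`dim_ℂ (I/mI)_k ≥ r`: there are `r` homogeneous degree-`k` elements of `I` that are
linearly independent modulo `m * I`. -/
def MinGensAtLeast (I : Ideal (MvPolynomial (Fin n) ℂ)) (k r : ℕ) : Prop :=
  ∃ Θ : Fin r → MvPolynomial (Fin n) ℂ,
    (∀ i, Θ i ∈ I ∧ (Θ i).IsHomogeneous k) ∧
    ∀ c : Fin r → ℂ, (∑ i, c i • Θ i) ∈ irrIdeal n * I → ∀ i, c i = 0

/-- `F` is an `s`-fold direct sum of degree `d`: `F = F_1 + ⋯ + F_s` where the `F_i` are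
nonzero degree-`d` forms in independent subspaces `V_i` of the space of linear forms with
`V = V_1 ⊕ ⋯ ⊕ V_s` (i.e. in disjoint sets of variables, up to linear change of variables;
`F_i ∈ S^d V_i` is expressed as membership in the subalgebra generated by `V_i`). -/
def IsSFoldDirectSum (F : MvPolynomial (Fin n) ℂ) (d s : ℕ) : Prop :=
  ∃ (V : Fin s → Submodule ℂ (MvPolynomial (Fin n) ℂ))
    (G : Fin s → MvPolynomial (Fin n) ℂ),
    (∀ i, V i ≤ homogeneousSubmodule (Fin n) ℂ 1) ∧
    iSupIndep V ∧
    (⨆ i, V i) = homogeneousSubmodule (Fin n) ℂ 1 ∧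
    (∀ i, G i ≠ 0 ∧ (G i).IsHomogeneous d ∧ G i ∈ Algebra.adjoin ℂ (V i : Set _)) ∧
    F = ∑ i, G i

/-- `F` is a direct sum: `F = F₁ + F₂` with `F₁ ∈ S^d V₁`, `F₂ ∈ S^d V₂` nonzero and
`V = V₁ ⊕ V₂`. -/
def IsDirectSum (F : MvPolynomial (Fin n) ℂ) (d : ℕ) : Prop :=
  IsSFoldDirectSum F d 2

/-- `F` is a limit (as `t → 0`) of `s`-fold direct sums of degree `d`. -/
def IsLimitOfSFoldDirectSums (F : MvPolynomial (Fin n) ℂ) (d s : ℕ) : Prop :=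
  ∃ G : ℂ → MvPolynomial (Fin n) ℂ,
    (∀ t : ℂ, t ≠ 0 → IsSFoldDirectSum (G t) d s) ∧
    ∀ m : Fin n →₀ ℕ,
      Filter.Tendsto (fun t => MvPolynomial.coeff m (G t))
        (nhdsWithin (0 : ℂ) {(0 : ℂ)}ᶜ) (nhds (MvPolynomial.coeff m F))

/-- `F` is a limit of direct sums. -/
def IsLimitOfDirectSums (F : MvPolynomial (Fin n) ℂ) (d : ℕ) : Prop :=
  IsLimitOfSFoldDirectSums F d 2

/-- `F` is concise: `(F^⊥)_1 = 0`, i.e. `F` cannot be written using fewer variables. -/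
def Concise (F : MvPolynomial (Fin n) ℂ) : Prop :=
  ∀ Θ : MvPolynomial (Fin n) ℂ, Θ.IsHomogeneous 1 → contract Θ F = 0 → Θ = 0

end Apolarity

/-!
Write `F = G₁ + ⋯ + G_s` with `G_k ∈ ℂ[V_k]`. Since the subspaces `V_k` are independent, some
algebra endomorphism of `S` fixes `ℂ[V_i]` and collapses every other `ℂ[V_j]` to constants, so
elements of the `ℂ[V_k]` that add up to a constant are constants themselves. This gives two facts.
First, the `G_k` are linearly independent (a nonzero form of degree `d ≥ 1` is not a constant), and
as the apolarity pairing `T_d × S_d → ℂ` is perfect there are `Θ_j ∈ T_d` with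
`Θ_j ⌟ G_k = δ_jk`; the differences `Θ_j - Θ₁` then lie in `F^⊥`.
Second, for `ψ ∈ F^⊥` the summands `ψ ⌟ G_k ∈ ℂ[V_k]` add up to `0`, so each is a constant and is
killed by `m`: thus `m F^⊥` annihilates every `G_k`. Pairing with `G₂, …, G_s` now shows that the
`s - 1` forms `Θ_j - Θ₁` are independent modulo `m F^⊥`.
-/

namespace MvPolynomial

section Derivatives

variable {σ R : Type*} [CommSemiring R]

theorem IsHomogeneous.exists_pderiv_ne_zero [Fintype σ] [CharZero R] [NoZeroDivisors R]
    {φ : MvPolynomial σ R} {d : ℕ} (hφ : φ.IsHomogeneous (d + 1)) (h0 : φ ≠ 0) :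
    ∃ i, pderiv i φ ≠ 0 := by
  by_contra! h
  have euler := hφ.sum_X_mul_pderiv
  simp only [h, mul_zero, Finset.sum_const_zero, nsmul_eq_mul] at euler
  exact h0 ((mul_eq_zero.1 euler.symm).resolve_left (Nat.cast_ne_zero.2 d.succ_ne_zero))

theorem pderiv_mem_bot_of_mem_span_X {v : MvPolynomial σ R}
    (hv : v ∈ Submodule.span R (Set.range X)) (i : σ) :
    pderiv i v ∈ (⊥ : Subalgebra R (MvPolynomial σ R)) := by
  classical
  induction hv using Submodule.span_induction with
  | mem _ hx =>
    obtain ⟨k, rfl⟩ := hx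
    rw [pderiv_X]
    rcases eq_or_ne i k with rfl | hik <;> simp [*]
  | zero => simp
  | add _ _ _ _ hx hy => simpa using Subalgebra.add_mem _ hx hy
  | smul c _ _ hx => simpa using Subalgebra.smul_mem _ hx c

theorem pderiv_mem_adjoin {V : Submodule R (MvPolynomial σ R)}
    (hV : V ≤ homogeneousSubmodule σ R 1) (i : σ) {x : MvPolynomial σ R}
    (hx : x ∈ Algebra.adjoin R (V : Set (MvPolynomial σ R))) :
    pderiv i x ∈ Algebra.adjoin R (V : Set (MvPolynomial σ R)) := by
  induction hx using Algebra.adjoin_induction with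
  | mem v hv =>
    rw [homogeneousSubmodule_one_eq_span_X] at hV
    exact (bot_le : ⊥ ≤ Algebra.adjoin R _) (pderiv_mem_bot_of_mem_span_X (hV hv) i)
  | algebraMap r => simp [algebraMap_eq]
  | add x y _ _ hx hy => simpa using Subalgebra.add_mem _ hx hy
  | mul x y hx' hy' hx hy =>
    rw [pderiv_mul]
    exact Subalgebra.add_mem _ (Subalgebra.mul_mem _ hx hy') (Subalgebra.mul_mem _ hx' hy)

end Derivatives

section DirectSum

variable {σ K ι : Type*} [Field K] {V : ι → Submodule K (MvPolynomial σ K)}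

theorem exists_algHom_fixing_adjoin_of_iSupIndep (hV : ∀ i, V i ≤ homogeneousSubmodule σ K 1)
    (hind : iSupIndep V) (i : ι) :
    ∃ P : MvPolynomial σ K →ₐ[K] MvPolynomial σ K,
      (∀ x ∈ Algebra.adjoin K (V i : Set (MvPolynomial σ K)), P x = x) ∧
      ∀ j ≠ i, ∀ x ∈ Algebra.adjoin K (V j : Set (MvPolynomial σ K)),
        P x ∈ (⊥ : Subalgebra K (MvPolynomial σ K)) := by
  obtain ⟨U, hWU, hUV⟩ := (hind i).symm.exists_isCompl
  let q := (V i).projection U hUV.symm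
  let P : MvPolynomial σ K →ₐ[K] MvPolynomial σ K := aeval fun k => q (X k)
  have hPq : ∀ v ∈ homogeneousSubmodule σ K 1, P v = q v := by
    rw [homogeneousSubmodule_one_eq_span_X]
    exact fun v hv => LinearMap.eqOn_span (f := P.toLinearMap) (by rintro _ ⟨k, rfl⟩; simp [P]) hv
  refine ⟨P, fun x hx => ?_, fun j hji x hx => ?_⟩
  · have hle : Algebra.adjoin K (V i : Set (MvPolynomial σ K)) ≤ AlgHom.equalizer P (.id K _) :=
      Algebra.adjoin_le fun v hv => by
        simp [hPq v (hV i hv), q, Submodule.projection_apply_of_mem_left _ hv]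
    exact hle hx
  · have hle : Algebra.adjoin K (V j : Set (MvPolynomial σ K)) ≤ (⊥ : Subalgebra K _).comap P :=
      Algebra.adjoin_le fun v hv => by
        have hvU : v ∈ U := hWU (le_biSup V hji hv)
        simp [hPq v (hV j hv), q, Submodule.projection_apply_of_mem_right _ hvU]
    exact hle hx

theorem mem_bot_of_sum_mem_bot_of_iSupIndep [Fintype ι] [DecidableEq ι]
    (hV : ∀ i, V i ≤ homogeneousSubmodule σ K 1) (hind : iSupIndep V) {y : ι → MvPolynomial σ K}
    (hy : ∀ j, y j ∈ Algebra.adjoin K (V j : Set (MvPolynomial σ K)))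
    (hsum : ∑ j, y j ∈ (⊥ : Subalgebra K (MvPolynomial σ K))) (i : ι) :
    y i ∈ (⊥ : Subalgebra K (MvPolynomial σ K)) := by
  obtain ⟨P, hfix, hkill⟩ := exists_algHom_fixing_adjoin_of_iSupIndep hV hind i
  have hPsum : P (∑ j, y j) ∈ (⊥ : Subalgebra K (MvPolynomial σ K)) := by
    obtain ⟨c, hc⟩ := Algebra.mem_bot.1 hsum
    rw [← hc, AlgHom.commutes]
    exact Subalgebra.algebraMap_mem _ c
  rw [map_sum, ← Finset.add_sum_erase _ _ (Finset.mem_univ i), hfix _ (hy i)] at hPsum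
  have hrest : ∑ j ∈ Finset.univ.erase i, P (y j) ∈ (⊥ : Subalgebra K (MvPolynomial σ K)) :=
    Subalgebra.sum_mem _ fun j hj => hkill j (Finset.ne_of_mem_erase hj) _ (hy j)
  simpa using Subalgebra.sub_mem _ hPsum hrest

end DirectSum

end MvPolynomial

section Contract

variable {n : ℕ}

@[simp] lemma contract_add_left (Θ Ψ F : MvPolynomial (Fin n) ℂ) :
    contract (Θ + Ψ) F = contract Θ F + contract Ψ F := by
  simp [contract]

@[simp] lemma contract_sub_left (Θ Ψ F : MvPolynomial (Fin n) ℂ) :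
    contract (Θ - Ψ) F = contract Θ F - contract Ψ F := by
  simp [contract]

@[simp] lemma contract_smul_left (c : ℂ) (Θ F : MvPolynomial (Fin n) ℂ) :
    contract (c • Θ) F = c • contract Θ F := by
  simp [contract]

@[simp] lemma contract_sum_left {ι : Type*} (s : Finset ι) (Θ : ι → MvPolynomial (Fin n) ℂ)
    (F : MvPolynomial (Fin n) ℂ) : contract (∑ i ∈ s, Θ i) F = ∑ i ∈ s, contract (Θ i) F := by
  simp [contract]

@[simp] lemma contract_sum_right {ι : Type*} (s : Finset ι) (Θ : MvPolynomial (Fin n) ℂ)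
    (F : ι → MvPolynomial (Fin n) ℂ) : contract Θ (∑ i ∈ s, F i) = ∑ i ∈ s, contract Θ (F i) :=
  map_sum _ _ _

@[simp] lemma contract_smul_right (c : ℂ) (Θ F : MvPolynomial (Fin n) ℂ) :
    contract Θ (c • F) = c • contract Θ F :=
  map_smul _ _ _

@[simp] lemma contract_C (c : ℂ) (F : MvPolynomial (Fin n) ℂ) : contract (C c) F = c • F := by
  rw [contract, ← algebraMap_eq, AlgHom.commutes, Module.algebraMap_end_apply]

@[simp] lemma contract_one (F : MvPolynomial (Fin n) ℂ) : contract 1 F = F := by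
  simp [contract]

lemma contract_mul (Θ Ψ F : MvPolynomial (Fin n) ℂ) :
    contract (Θ * Ψ) F = contract Θ (contract Ψ F) := by
  simp [contract]

lemma isHomogeneous_contract_X_pow {F : MvPolynomial (Fin n) ℂ} {d : ℕ} (hF : F.IsHomogeneous d)
    (i : Fin n) (t : ℕ) : (contract (X i ^ t) F).IsHomogeneous (d - t) := by
  induction t generalizing F d with
  | zero => simpa using hF
  | succ t ih =>
    rw [pow_succ, contract_mul, contract_X, Nat.sub_succ', ← Nat.sub_right_comm]
    exact ih hF.pderiv

lemma isHomogeneous_contract_monomial {F : MvPolynomial (Fin n) ℂ} {d : ℕ}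
    (hF : F.IsHomogeneous d) (b : Fin n →₀ ℕ) (c : ℂ) :
    (contract (monomial b c) F).IsHomogeneous (d - b.degree) := by
  induction b using Finsupp.induction generalizing F d with
  | zero => simpa using (homogeneousSubmodule (Fin n) ℂ d).smul_mem c hF
  | single_add i t b _ _ ih =>
    rw [add_comm, monomial_add_single, contract_mul, map_add, Finsupp.degree_single,
      ← Nat.sub_sub, Nat.sub_right_comm]
    exact ih (isHomogeneous_contract_X_pow hF i t)

theorem isHomogeneous_contract {Θ F : MvPolynomial (Fin n) ℂ} {e d : ℕ}
    (hΘ : Θ.IsHomogeneous e) (hF : F.IsHomogeneous d) :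
    (contract Θ F).IsHomogeneous (d - e) := by
  rw [Θ.as_sum, contract_sum_left]
  refine IsHomogeneous.sum _ _ _ fun b hb => ?_
  have hb : b.degree = e := by
    rw [Finsupp.degree_eq_weight_one]; exact hΘ (mem_support_iff.1 hb)
  exact hb ▸ isHomogeneous_contract_monomial hF b _

theorem contract_eq_C_of_isHomogeneous {Θ F : MvPolynomial (Fin n) ℂ} {d : ℕ}
    (hΘ : Θ.IsHomogeneous d) (hF : F.IsHomogeneous d) :
    contract Θ F = C (coeff 0 (contract Θ F)) := by
  rw [← totalDegree_eq_zero_iff_eq_C, totalDegree_zero_iff_isHomogeneous, ← Nat.sub_self d]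
  exact isHomogeneous_contract hΘ hF

theorem contract_mem_adjoin {V : Submodule ℂ (MvPolynomial (Fin n) ℂ)}
    (hV : V ≤ homogeneousSubmodule (Fin n) ℂ 1) (Θ : MvPolynomial (Fin n) ℂ)
    {F : MvPolynomial (Fin n) ℂ} (hF : F ∈ Algebra.adjoin ℂ (V : Set (MvPolynomial (Fin n) ℂ))) :
    contract Θ F ∈ Algebra.adjoin ℂ (V : Set (MvPolynomial (Fin n) ℂ)) := by
  induction Θ using MvPolynomial.induction_on generalizing F with
  | C c => simpa using Subalgebra.smul_mem _ hF c
  | add Θ Ψ hΘ hΨ => simpa using Subalgebra.add_mem _ (hΘ hF) (hΨ hF)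
  | mul_X Θ i hΘ =>
    rw [contract_mul, contract_X]
    exact hΘ (pderiv_mem_adjoin hV i hF)

theorem exists_isHomogeneous_coeff_contract_ne_zero {F : MvPolynomial (Fin n) ℂ} {d : ℕ}
    (hF : F.IsHomogeneous d) (h0 : F ≠ 0) :
    ∃ Θ : MvPolynomial (Fin n) ℂ, Θ.IsHomogeneous d ∧ coeff 0 (contract Θ F) ≠ 0 := by
  induction d generalizing F with
  | zero =>
    refine ⟨1, isHomogeneous_one _ _, ?_⟩
    rw [← totalDegree_zero_iff_isHomogeneous, totalDegree_eq_zero_iff_eq_C] at hF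
    rw [contract_one]
    exact fun hc => h0 (by rw [hF, hc, C_0])
  | succ d ih =>
    obtain ⟨i, hi⟩ := hF.exists_pderiv_ne_zero h0
    obtain ⟨Θ, hΘ, hΘF⟩ := ih hF.pderiv hi
    exact ⟨Θ * X i, hΘ.mul (isHomogeneous_X _ i), by rwa [contract_mul, contract_X]⟩

theorem exists_contract_eq_ite {ι : Type*} [Fintype ι] [DecidableEq ι]
    {G : ι → MvPolynomial (Fin n) ℂ} {d : ℕ} (hli : LinearIndependent ℂ G)
    (hG : ∀ k, (G k).IsHomogeneous d) :
    ∃ Θ : ι → MvPolynomial (Fin n) ℂ, (∀ j, (Θ j).IsHomogeneous d) ∧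
      ∀ j k, contract (Θ j) (G k) = if j = k then 1 else 0 := by
  let pairing : homogeneousSubmodule (Fin n) ℂ d →ₗ[ℂ] ι → ℂ := LinearMap.pi fun k =>
    (lcoeff ℂ 0 ∘ₗ LinearMap.applyₗ (G k) ∘ₗ (apolarAlgHom n).toLinearMap) ∘ₗ Submodule.subtype _
  have hpairing (Θ) (k) : pairing Θ k = coeff 0 (contract Θ (G k)) := rfl
  have hsurj : Function.Surjective pairing := by
    rw [← LinearMap.dualMap_injective_iff, injective_iff_map_eq_zero]
    intro f hf
    set a := fun k => f (Pi.single k 1)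
    have hfa (v : ι → ℂ) : f v = ∑ k, a k * v k := by
      conv_lhs => rw [pi_eq_sum_univ' v]
      simp [a, mul_comm]
    have hsum : ∑ k, a k • G k = 0 := by
      by_contra hne
      obtain ⟨Θ, hΘ, hΘF⟩ := exists_isHomogeneous_coeff_contract_ne_zero
        (IsHomogeneous.sum _ _ _ fun k _ => (homogeneousSubmodule _ _ d).smul_mem _ (hG k)) hne
      have hfΘ := LinearMap.congr_fun hf ⟨Θ, hΘ⟩
      rw [LinearMap.dualMap_apply, hfa] at hfΘ
      simp only [contract_sum_right, contract_smul_right, coeff_sum, coeff_smul, smul_eq_mul] at hΘF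
      exact hΘF (by simpa [hpairing] using hfΘ)
    have ha := Fintype.linearIndependent_iff.1 hli a hsum
    ext k
    exact ha k
  choose Θ hΘ using fun j => hsurj (Pi.single j 1)
  refine ⟨fun j => Θ j, fun j => (Θ j).2, fun j k => ?_⟩
  rw [contract_eq_C_of_isHomogeneous (Θ j).2 (hG k), ← hpairing, hΘ j]
  split_ifs with hjk <;> simp [hjk, eq_comm]

theorem irrIdeal_mul_apolarIdeal_le {F G : MvPolynomial (Fin n) ℂ}
    (h : ∀ ψ ∈ apolarIdeal F, contract ψ G ∈ (⊥ : Subalgebra ℂ (MvPolynomial (Fin n) ℂ))) :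
    irrIdeal n * apolarIdeal F ≤ apolarIdeal G := by
  refine Ideal.mul_le.2 fun θ hθ ψ hψ => ?_
  obtain ⟨c, hc⟩ := Algebra.mem_bot.1 (h ψ hψ)
  have hθc : irrIdeal n ≤ apolarIdeal (algebraMap ℂ _ c) :=
    Ideal.span_le.2 <| by rintro _ ⟨i, rfl⟩; simp [algebraMap_eq]
  rw [mem_apolarIdeal, contract_mul, ← hc]
  exact hθc hθ

theorem linearIndependent_of_mem_adjoin {ι : Type*} [Fintype ι] [DecidableEq ι]
    {V : ι → Submodule ℂ (MvPolynomial (Fin n) ℂ)}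
    (hV : ∀ i, V i ≤ homogeneousSubmodule (Fin n) ℂ 1) (hind : iSupIndep V)
    {G : ι → MvPolynomial (Fin n) ℂ} {d : ℕ} (hd : d ≠ 0)
    (hGV : ∀ i, G i ∈ Algebra.adjoin ℂ (V i : Set (MvPolynomial (Fin n) ℂ)))
    (hG : ∀ i, (G i).IsHomogeneous d) (hG0 : ∀ i, G i ≠ 0) : LinearIndependent ℂ G := by
  refine Fintype.linearIndependent_iff.2 fun a ha i => ?_
  have hbot := mem_bot_of_sum_mem_bot_of_iSupIndep hV hind
    (fun j => Subalgebra.smul_mem _ (hGV j) (a j)) (ha ▸ Subalgebra.zero_mem _) i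
  obtain ⟨c, hc⟩ := Algebra.mem_bot.1 hbot
  by_contra hai
  have hdeg : (a i • G i).IsHomogeneous 0 := by
    rw [← hc, algebraMap_eq]; exact isHomogeneous_C _ c
  exact hd (((homogeneousSubmodule _ _ d).smul_mem (a i) (hG i)).inj_right hdeg
    (smul_ne_zero hai (hG0 i)))

theorem minGensAtLeast_of_contract_eq_ite {I : Ideal (MvPolynomial (Fin n) ℂ)} {k r : ℕ}
    (Θ : Fin r → MvPolynomial (Fin n) ℂ) (hΘI : ∀ i, Θ i ∈ I) (hΘ : ∀ i, (Θ i).IsHomogeneous k)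
    (H : Fin r → MvPolynomial (Fin n) ℂ) (hIH : ∀ j, irrIdeal n * I ≤ apolarIdeal (H j))
    (hΘH : ∀ i j, contract (Θ i) (H j) = if i = j then 1 else 0) : MinGensAtLeast I k r := by
  refine ⟨Θ, fun i => ⟨hΘI i, hΘ i⟩, fun c hc j => ?_⟩
  simpa [hΘH] using hIH j hc

end Contract

theorem sfold_direct_sum_min_generators_general
    (n d s : ℕ) (hd : 1 ≤ d) (F : MvPolynomial (Fin n) ℂ)
    (hDS : IsSFoldDirectSum F d s) :
    MinGensAtLeast (apolarIdeal F) d (s - 1) := by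
  obtain ⟨V, G, hV, hind, -, hG, rfl⟩ := hDS
  choose hG0 hGd hGV using hG
  obtain _ | s := s
  · exact ⟨finZeroElim, finZeroElim, fun _ _ => finZeroElim⟩
  obtain ⟨Θ, hΘd, hΘG⟩ := exists_contract_eq_ite
    (linearIndependent_of_mem_adjoin hV hind (by omega) hGV hGd hG0) hGd
  have hann : ∀ k, irrIdeal n * apolarIdeal (∑ j, G j) ≤ apolarIdeal (G k) := fun k =>
    irrIdeal_mul_apolarIdeal_le fun ψ hψ =>
      mem_bot_of_sum_mem_bot_of_iSupIndep hV hind (fun j => contract_mem_adjoin (hV j) ψ (hGV j))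
        (by rw [← contract_sum_right, hψ]; exact Subalgebra.zero_mem _) k
  refine minGensAtLeast_of_contract_eq_ite (fun i => Θ i.succ - Θ 0) (fun i => ?_)
    (fun i => (hΘd _).sub (hΘd 0)) (fun i => G i.succ) (fun i => hann _) (fun i j => ?_)
  · simp [hΘG]
  · simp [hΘG, (Fin.succ_ne_zero j).symm]

/-- If a homogeneous form `F` of degree `d` in `n` variables is an
`s`-fold direct sum, then `F^⊥` has at least `s - 1` minimal generators of degree `d`. -/
theorem sfold_direct_sum_min_generators
    (n d s : ℕ) (hd : 1 ≤ d) (F : MvPolynomial (Fin n) ℂ)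
    (hF : F.IsHomogeneous d) (hDS : IsSFoldDirectSum F d s) :
    MinGensAtLeast (apolarIdeal F) d (s - 1) :=
  sfold_direct_sum_min_generators_general n d s hd F hDS
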